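/- arXiv:2406.16101 — 4 statements merged into one kernel-verified Lean document; each statement's English description precedes it below -/
import Mathlib

section
/- Let D be a simple digraph that is P_{t+1,2}-free, and let v ∈ V(D). Write V_1 = N^+(v), τ(v) = |N^+(v) ∩ N^-(v)|, and d^+(v) = |N^+(v)|. Then every vertex u ∈ V(D) \ (V_1 ∪ {v}) has at most d^+(v) − τ(v) + t successors in V_1. -/
open Finset

def outN {V : Type*} [Fintype V] [DecidableEq V] (A : V → V → Prop) [DecidableRel A] (v : V) : Finset V :=
  univ.filter (fun x => A v x)

def inN {V : Type*} [Fintype V] [DecidableEq V] (A : V → V → Prop) [DecidableRel A] (v : V) : Finset V :=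
  univ.filter (fun x => A x v)

def arcsFromTo {V : Type*} [Fintype V] [DecidableEq V] (A : V → V → Prop) [DecidableRel A]
    (S T : Finset V) : ℕ :=
  ((S ×ˢ T).filter (fun p => A p.1 p.2)).card

def arcCount {V : Type*} [Fintype V] [DecidableEq V] (A : V → V → Prop) [DecidableRel A] : ℕ :=
  (univ.filter (fun p : V × V => A p.1 p.2)).card

def PFree {V : Type*} [Fintype V] [DecidableEq V] (t : ℕ) (A : V → V → Prop) [DecidableRel A] : Prop :=
  ∀ x z : V, x ≠ z → (univ.filter (fun y => A x y ∧ A y z)).card ≤ t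

noncomputable def exP (n t : ℕ) : ℕ :=
  sSup {m | ∃ A : Fin n → Fin n → Bool, (∀ x, ¬ (A x x = true)) ∧
    PFree t (fun x y => A x y = true) ∧ arcCount (fun x y => A x y = true) = m}

theorem stmt1 {V : Type*} [Fintype V] [DecidableEq V] (t : ℕ) (A : V → V → Prop) [DecidableRel A]
    (hirr : ∀ x, ¬ A x x) (hfree : PFree t A)
    (v u : V) (hu : u ∉ outN A v) (huv : u ≠ v) :
    ((outN A v).filter (fun x => A u x)).card ≤
      (outN A v).card - ((outN A v) ∩ (inN A v)).card + t := by
  classical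
  set S := (outN A v).filter (fun x => A u x) with hS
  have hsplit : S = S.filter (fun x => A x v) ∪ S.filter (fun x => ¬ A x v) :=
    (filter_union_filter_not_eq _ S).symm
  have h1 : (S.filter (fun x => A x v)).card ≤ t := by
    refine le_trans (card_le_card ?_) (hfree u v huv)
    intro x hx
    simp only [S, mem_filter, mem_univ, true_and] at hx ⊢
    exact ⟨hx.1.2, hx.2⟩
  have h2 : (S.filter (fun x => ¬ A x v)).card ≤
      (outN A v).card - ((outN A v) ∩ (inN A v)).card := by
    have hsub : S.filter (fun x => ¬ A x v) ⊆ outN A v \ ((outN A v) ∩ (inN A v)) := by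
      intro x hx
      simp only [S, mem_filter, mem_sdiff, mem_inter, inN, mem_univ, true_and] at hx ⊢
      exact ⟨hx.1.1, fun h => hx.2 h.2⟩
    calc (S.filter (fun x => ¬ A x v)).card
        ≤ (outN A v \ ((outN A v) ∩ (inN A v))).card := card_le_card hsub
      _ = (outN A v).card - ((outN A v) ∩ (inN A v)).card :=
        card_sdiff_of_subset (by exact inter_subset_left)
  calc S.card ≤ (S.filter (fun x => A x v)).card + (S.filter (fun x => ¬ A x v)).card := by
        conv_lhs => rw [hsplit]
        exact card_union_le _ _
    _ ≤ t + ((outN A v).card - ((outN A v) ∩ (inN A v)).card) := Nat.add_le_add h1 h2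
    _ = _ := Nat.add_comm _ _
end

section
/- Let D be a P_{t+1,2}-free simple digraph on n vertices with at least (n² − t²)/4 + tn − t arcs, where t ≥ 2 and n ≥ 17t²/2 + 30t + 27. Let Δ denote the maximum out-degree of D. Then (n + 1 − √(2n + 1 + t²))/2 ≤ Δ ≤ (n + 1 + √(2n + 1 + t²))/2. -/
open Finset

theorem stmt5 {V : Type*} [Fintype V] [DecidableEq V] (t : ℕ) (A : V → V → Prop) [DecidableRel A]
    (hirr : ∀ x, ¬ A x x) (hfree : PFree t A) (ht : 2 ≤ t)
    (hn : 17 * (t : ℚ)^2 / 2 + 30 * t + 27 ≤ (Fintype.card V : ℚ))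
    (hsize : ((Fintype.card V : ℚ)^2 - (t : ℚ)^2) / 4 + t * (Fintype.card V) - t ≤
      (arcCount A : ℚ)) :
    ((Fintype.card V : ℝ) + 1 - Real.sqrt (2 * (Fintype.card V) + 1 + t^2)) / 2 ≤
      ((univ.sup (fun v => (outN A v).card) : ℕ) : ℝ) ∧
    ((univ.sup (fun v => (outN A v).card) : ℕ) : ℝ) ≤
      ((Fintype.card V : ℝ) + 1 + Real.sqrt (2 * (Fintype.card V) + 1 + t^2)) / 2 := by
  classical
  set n := Fintype.card V with hn_def
  set Δ := univ.sup (fun v => (outN A v).card) with hΔ_def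
  have htq : (2:ℚ) ≤ t := by exact_mod_cast ht
  have hn0 : (0:ℚ) < n := by nlinarith
  have hnpos : 0 < n := by exact_mod_cast hn0
  have : Nonempty V := Fintype.card_pos_iff.mp hnpos
  obtain ⟨v, -, hv0⟩ := Finset.exists_mem_eq_sup (univ : Finset V) univ_nonempty
    (fun v => (outN A v).card)
  have hv : Δ = (outN A v).card := hΔ_def.trans hv0
  have hle : ∀ u, (outN A u).card ≤ Δ :=
    fun u => Finset.le_sup (f := fun w => (outN A w).card) (mem_univ u)
  have hΔn : Δ ≤ n := le_of_eq_of_le hv ((Finset.card_le_univ _).trans_eq hn_def.symm)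
  have hn1 : 1 ≤ n := hnpos
  -- arc count as sum of out-degrees
  have hsum : arcCount A = ∑ u, (outN A u).card := by
    unfold arcCount outN
    rw [Finset.card_filter, Fintype.sum_prod_type]
    simp only [Finset.card_filter]
  -- bound on the sum over the out-neighborhood of v
  have h1 : ∑ u ∈ outN A v, (outN A u).card
      = ∑ z : V, ((outN A v).filter (fun u => A u z)).card := by
    simp only [Finset.card_filter]
    rw [Finset.sum_comm]
    simp [outN]
  have h2 : ∀ z ∈ univ.erase v, ((outN A v).filter (fun u => A u z)).card ≤ t := by
    intro z hz
    have hz' : v ≠ z := (Finset.ne_of_mem_erase hz).symm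
    refine le_trans (Finset.card_le_card ?_) (hfree v z hz')
    intro y hy
    simp only [outN, Finset.mem_filter, Finset.mem_univ, true_and] at hy ⊢
    exact hy
  have h3 : ((outN A v).filter (fun u => A u v)).card ≤ Δ :=
    (Finset.card_filter_le _ _).trans (hle v)
  have bound1 : ∑ u ∈ outN A v, (outN A u).card ≤ Δ + (n-1) * t := by
    rw [h1]
    calc ∑ z : V, ((outN A v).filter (fun u => A u z)).card
        = ((outN A v).filter (fun u => A u v)).card
          + ∑ z ∈ univ.erase v, ((outN A v).filter (fun u => A u z)).card :=
          (Finset.add_sum_erase _ _ (mem_univ v)).symm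
      _ ≤ Δ + (univ.erase v).card * t :=
          add_le_add h3 (Finset.sum_le_card_nsmul _ _ _ h2)
      _ = Δ + (n-1) * t := by
          rw [Finset.card_erase_of_mem (mem_univ v), Finset.card_univ]
  have bound2 : ∑ u ∈ (outN A v)ᶜ, (outN A u).card ≤ (n - Δ) * Δ := by
    calc ∑ u ∈ (outN A v)ᶜ, (outN A u).card
        ≤ (outN A v)ᶜ.card * Δ :=
          Finset.sum_le_card_nsmul _ _ _ (fun u _ => hle u)
      _ = (n - Δ) * Δ := by rw [Finset.card_compl, ← hv, ← hn_def]
  have key : arcCount A ≤ Δ + (n-1) * t + (n - Δ) * Δ := by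
    rw [hsum, ← Finset.sum_add_sum_compl (outN A v) (fun u => (outN A u).card)]
    exact add_le_add bound1 bound2
  have keyQ : (arcCount A : ℚ) ≤ (Δ:ℚ) + ((n:ℚ)-1) * t + ((n:ℚ) - Δ) * Δ := by
    calc (arcCount A : ℚ) ≤ ((Δ + (n-1) * t + (n - Δ) * Δ : ℕ) : ℚ) := by exact_mod_cast key
      _ = (Δ:ℚ) + ((n:ℚ)-1) * t + ((n:ℚ) - Δ) * Δ := by
          push_cast [Nat.cast_sub hΔn, Nat.cast_sub hn1]; ring
  have hq : ((n:ℚ)^2 - (t:ℚ)^2)/4 ≤ (Δ:ℚ) * ((n:ℚ) + 1 - Δ) := by nlinarith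
  have hqR : ((n:ℝ)^2 - (t:ℝ)^2)/4 ≤ (Δ:ℝ) * ((n:ℝ) + 1 - Δ) := by exact_mod_cast hq
  have hsq : ((Δ:ℝ) - ((n:ℝ)+1)/2)^2 ≤ (2*(n:ℝ) + 1 + (t:ℝ)^2)/4 := by nlinarith
  have hdnn : (0:ℝ) ≤ 2*(n:ℝ) + 1 + (t:ℝ)^2 := by positivity
  have habs : |(Δ:ℝ) - ((n:ℝ)+1)/2| ≤ Real.sqrt (2*(n:ℝ)+1+(t:ℝ)^2) / 2 := by
    rw [← Real.sqrt_sq_eq_abs]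
    calc Real.sqrt (((Δ:ℝ) - ((n:ℝ)+1)/2)^2)
        ≤ Real.sqrt ((2*(n:ℝ) + 1 + (t:ℝ)^2)/4) := Real.sqrt_le_sqrt hsq
      _ = Real.sqrt (2*(n:ℝ)+1+(t:ℝ)^2) / 2 := by
          rw [show (2*(n:ℝ) + 1 + (t:ℝ)^2)/4 = (2*(n:ℝ)+1+(t:ℝ)^2) * (1/2)^2 by ring,
            Real.sqrt_mul hdnn, Real.sqrt_sq (by norm_num)]
          ring
  have habs' := abs_le.mp habs
  have hcast : Real.sqrt (2 * (n:ℝ) + 1 + (t:ℝ)^2)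
      = Real.sqrt (2 * ((n:ℕ) : ℝ) + 1 + ((t:ℕ) : ℝ)^2) := rfl
  constructor <;> push_cast <;> [linarith [habs'.1]; linarith [habs'.2]]
end

section
/- Let D be a P_{t+1,2}-free simple digraph on n vertices with at least (n² − t²)/4 + tn − t arcs, where t ≥ 2 and n ≥ max{t³ + 4t² + 3t + 4, 17t²/2 + 30t + 27}. Suppose the maximum out-degree of D is Δ. Then for every vertex v with out-degree Δ, one has α_2(v) ≤ 2t + 3, where α_2(v) = max over vertices u ∉ N^+(v) of the number of successors of u lying outside N^+(v). -/
set_option maxHeartbeats 1000000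

open Finset

section Aux

variable {V : Type*} [Fintype V] [DecidableEq V] (A : V → V → Prop) [DecidableRel A]

omit [DecidableEq V] in
lemma aux_sum_out_eq (S : Finset V) :
    ∑ x ∈ S, (univ.filter (fun z => A x z)).card
      = ∑ z : V, (S.filter (fun x => A x z)).card := by
  simp only [card_filter]
  exact Finset.sum_comm

lemma aux_arcCount_eq :
    arcCount A = ∑ x : V, (univ.filter (fun z => A x z)).card := by
  unfold arcCount
  simp only [card_filter]
  rw [← Finset.univ_product_univ, Finset.sum_product]

lemma aux_rowsum {t : ℕ} (hfree : PFree t A) (w : V) (S : Finset V) (hS : ∀ x ∈ S, A w x) :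
    ∑ x ∈ S, (univ.filter (fun z => A x z)).card
      ≤ t * (Fintype.card V - 1) + S.card := by
  rw [aux_sum_out_eq]
  rw [← Finset.sum_erase_add _ _ (mem_univ w)]
  have h1 : ∑ z ∈ univ.erase w, (S.filter (fun x => A x z)).card
      ≤ (univ.erase w).card • t := by
    apply Finset.sum_le_card_nsmul
    intro z hz
    have hzw : w ≠ z := fun h => (mem_erase.mp hz).1 h.symm
    calc (S.filter (fun x => A x z)).card
        ≤ (univ.filter (fun y => A w y ∧ A y z)).card := by
          apply card_le_card
          intro x hx
          rw [mem_filter] at hx ⊢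
          exact ⟨mem_univ x, hS x hx.1, hx.2⟩
      _ ≤ t := hfree w z hzw
  have h2 : (S.filter (fun x => A x w)).card ≤ S.card := card_filter_le _ _
  have h3 : (univ.erase w).card = Fintype.card V - 1 := by
    rw [card_erase_of_mem (mem_univ w), card_univ]
  rw [smul_eq_mul, h3] at h1
  rw [Nat.mul_comm t]
  exact Nat.add_le_add h1 h2

lemma aux_arith (nq tq Dq dq E : ℚ)
    (htq2 : 2 ≤ tq) (hn2 : 17*tq^2/2 + 30*tq + 27 ≤ nq)
    (hdgeq : 2*tq + 4 ≤ dq) (hdDq : dq ≤ Dq)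
    (hsize : (nq^2 - tq^2)/4 + tq*nq - tq ≤ E)
    (hq1 : E ≤ (nq - Dq)*Dq + (tq*(nq-1) + Dq))
    (hq2 : E ≤ ((nq - Dq - dq)*Dq + (tq*(nq-1) + dq)) + (tq*(nq-1) + Dq)) :
    False := by
  have key1 : (2*tq + 3) * (Dq - 1) ≤ tq * nq - tq + 1 + tq^2/4 := by
    nlinarith [sq_nonneg (nq - 2*Dq),
      mul_nonneg (by linarith : (0:ℚ) ≤ dq - 1 - (2*tq+3)) (by linarith : (0:ℚ) ≤ Dq - 1)]
  have key2 : (nq + 1 - 2*Dq)^2 ≤ 2*nq + 1 + tq^2 := by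
    nlinarith [hsize, hq1]
  have key3 : 0 ≤ nq + 1 - 2*Dq := by
    nlinarith [key1, hn2, htq2]
  have key4 : 3*nq - tq^2/2 - 5 ≤ (2*tq + 3) * (nq + 1 - 2*Dq) := by
    nlinarith [key1]
  have hL : 0 < 3*nq - tq^2/2 - 5 := by nlinarith [hn2, htq2, sq_nonneg tq]
  have hsq : (3*nq - tq^2/2 - 5)^2 ≤ ((2*tq+3) * (nq + 1 - 2*Dq))^2 := by
    have h0 : 0 ≤ (2*tq+3) * (nq + 1 - 2*Dq) := le_trans hL.le key4
    nlinarith [key4, hL, h0]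
  have hsq2 : ((2*tq+3) * (nq + 1 - 2*Dq))^2 ≤ (2*tq+3)^2 * (2*nq + 1 + tq^2) := by
    have := mul_le_mul_of_nonneg_left key2 (sq_nonneg (2*tq+3))
    nlinarith [this]
  have final : (2*tq+3)^2 * (2*nq + 1 + tq^2) < (3*nq - tq^2/2 - 5)^2 := by
    nlinarith [mul_nonneg (by nlinarith : (0:ℚ) ≤ nq - (17*tq^2/2 + 30*tq + 27)) (by nlinarith : (0:ℚ) ≤ nq),
      mul_nonneg (by nlinarith : (0:ℚ) ≤ nq - (17*tq^2/2 + 30*tq + 27)) (by nlinarith : (0:ℚ) ≤ tq^2),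
      sq_nonneg tq, sq_nonneg (tq-2), htq2, hn2,
      mul_nonneg (by linarith : (0:ℚ) ≤ tq - 2) (by nlinarith : (0:ℚ) ≤ tq^2*(tq-2))]
  linarith [le_trans hsq hsq2]

end Aux

theorem stmt6 {V : Type*} [Fintype V] [DecidableEq V] (t : ℕ) (A : V → V → Prop) [DecidableRel A]
    (hirr : ∀ x, ¬ A x x) (hfree : PFree t A) (ht : 2 ≤ t)
    (hn1 : t^3 + 4 * t^2 + 3 * t + 4 ≤ Fintype.card V)
    (hn2 : 17 * (t : ℚ)^2 / 2 + 30 * t + 27 ≤ (Fintype.card V : ℚ))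
    (hsize : ((Fintype.card V : ℚ)^2 - (t : ℚ)^2) / 4 + t * (Fintype.card V) - t ≤
      (arcCount A : ℚ)) :
    ∀ v : V, (outN A v).card = univ.sup (fun u => (outN A u).card) →
      ∀ u ∈ univ \ outN A v,
        ((univ \ outN A v).filter (fun x => A u x)).card ≤ 2 * t + 3 := by
  intro v hv u hu
  by_contra hcon
  push_neg at hcon
  set n := Fintype.card V with hn
  set D := (outN A v).card with hD
  set S := (univ \ outN A v).filter (fun x => A u x) with hSdef
  set d := S.card with hd
  have hmax : ∀ x : V, (outN A x).card ≤ D := by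
    intro x; rw [hv]; exact Finset.le_sup (f := fun u => #(outN A u)) (mem_univ x)
  have hdge : 2 * t + 4 ≤ d := hcon
  have hsub1 : S ⊆ univ \ outN A v := filter_subset _ _
  have hSout : ∀ x ∈ S, A u x := fun x hx => (mem_filter.mp hx).2
  have hdD : d ≤ D := by
    refine le_trans (card_le_card ?_) (hmax u)
    intro x hx
    simp only [outN, mem_filter]
    exact ⟨mem_univ x, hSout x hx⟩
  have hV1out : ∀ x ∈ outN A v, A v x := by
    intro x hx
    exact (mem_filter.mp hx).2
  have hDn : D ≤ n := by rw [hD, hn]; exact card_le_univ _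
  have hc1 : (univ \ outN A v).card = n - D := by
    rw [card_sdiff_of_subset (subset_univ _), card_univ]
  have hdn : d ≤ n - D := by rw [← hc1]; exact card_le_card hsub1
  have hc2 : ((univ \ outN A v) \ S).card = (n - D) - d := by
    rw [card_sdiff_of_subset hsub1, hc1]
  have hn0 : 1 ≤ n := by
    have : 4 ≤ t^3 + 4*t^2 + 3*t + 4 := Nat.le_add_left 4 _
    omega
  -- total arc count decomposition
  set f : V → ℕ := fun x => (univ.filter (fun z => A x z)).card with hf
  have e1 : arcCount A = ∑ x : V, f x := aux_arcCount_eq A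
  have split1 : ∑ x : V, f x = ∑ x ∈ univ \ outN A v, f x + ∑ x ∈ outN A v, f x :=
    (Finset.sum_sdiff (subset_univ _)).symm
  have split2 : ∑ x ∈ univ \ outN A v, f x
      = ∑ x ∈ (univ \ outN A v) \ S, f x + ∑ x ∈ S, f x :=
    (Finset.sum_sdiff hsub1).symm
  have b1 : ∑ x ∈ outN A v, f x ≤ t * (n - 1) + D := aux_rowsum A hfree v _ hV1out
  have b2 : ∑ x ∈ S, f x ≤ t * (n - 1) + d := aux_rowsum A hfree u _ hSout
  have b3 : ∑ x ∈ (univ \ outN A v) \ S, f x ≤ ((n - D) - d) * D := by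
    calc ∑ x ∈ (univ \ outN A v) \ S, f x ≤ ((univ \ outN A v) \ S).card • D := by
          apply Finset.sum_le_card_nsmul
          intro x _
          exact hmax x
      _ = ((n - D) - d) * D := by rw [smul_eq_mul, hc2]
  have b3' : ∑ x ∈ univ \ outN A v, f x ≤ (n - D) * D := by
    calc ∑ x ∈ univ \ outN A v, f x ≤ (univ \ outN A v).card • D := by
          apply Finset.sum_le_card_nsmul
          intro x _
          exact hmax x
      _ = (n - D) * D := by rw [smul_eq_mul, hc1]
  have H1 : arcCount A ≤ (n - D) * D + (t * (n - 1) + D) := by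
    rw [e1, split1]; exact Nat.add_le_add b3' b1
  have H2 : arcCount A ≤ (((n - D) - d) * D + (t * (n - 1) + d)) + (t * (n - 1) + D) := by
    rw [e1, split1, split2]
    exact Nat.add_le_add (Nat.add_le_add b3 b2) b1
  -- move to ℚ
  have hq1 : (arcCount A : ℚ) ≤ ((n : ℚ) - D) * D + (t * ((n:ℚ) - 1) + D) := by
    calc (arcCount A : ℚ) ≤ (((n - D) * D + (t * (n - 1) + D) : ℕ) : ℚ) := by
          exact_mod_cast H1
      _ = ((n : ℚ) - D) * D + (t * ((n:ℚ) - 1) + D) := by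
          push_cast [Nat.cast_sub hDn, Nat.cast_sub hn0]
          ring
  have hq2 : (arcCount A : ℚ) ≤ ((((n:ℚ) - D) - d) * D + (t * ((n:ℚ) - 1) + d)) + (t * ((n:ℚ) - 1) + D) := by
    calc (arcCount A : ℚ) ≤ (((((n - D) - d) * D + (t * (n - 1) + d)) + (t * (n - 1) + D) : ℕ) : ℚ) := by
          exact_mod_cast H2
      _ = _ := by
          push_cast [Nat.cast_sub hDn, Nat.cast_sub hn0, Nat.cast_sub hdn]
          ring
  have hdgeq : 2 * (t:ℚ) + 4 ≤ (d:ℚ) := by exact_mod_cast hdge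
  have hdDq : (d:ℚ) ≤ (D:ℚ) := by exact_mod_cast hdD
  have htq2 : (2:ℚ) ≤ (t:ℚ) := by exact_mod_cast ht
  exact aux_arith (n:ℚ) (t:ℚ) (D:ℚ) (d:ℚ) (arcCount A : ℚ) htq2 hn2 hdgeq hdDq hsize hq1 hq2
end

section
/- Let D be a simple digraph on n vertices that is P_{t+1,2}-free, and suppose there exists a vertex v with d^+(v) = ⌈(n+t)/2⌉, such that every vertex of D has out-degree at most ⌈(n+t)/2⌉ and τ(v) = |N^+(v) ∩ N^-(v)| ≤ t + 1. Then e(D) ≤ ⌈(n+t)/2⌉·⌊(n−t)/2⌋ + tn + 1. -/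
open Finset

theorem stmt16 {V : Type*} [Fintype V] [DecidableEq V] (t : ℕ) (A : V → V → Prop) [DecidableRel A]
    (hirr : ∀ x, ¬ A x x) (hfree : PFree t A)
    (v : V) (hd : (outN A v).card = (Fintype.card V + t + 1) / 2)
    (hmax : ∀ u : V, (outN A u).card ≤ (Fintype.card V + t + 1) / 2)
    (hτ : ((outN A v) ∩ (inN A v)).card ≤ t + 1) :
    arcCount A ≤ (Fintype.card V + t + 1) / 2 * ((Fintype.card V - t) / 2)
      + t * Fintype.card V + 1 := by
  classical
  set n := Fintype.card V with hn
  set d := (n + t + 1) / 2 with hdef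
  set V1 := outN A v with hV1
  have hcard1 : V1.card = d := hd
  have hdn : d ≤ n := by rw [← hcard1, hn]; exact card_le_univ _
  have hn1 : 1 ≤ n := Fintype.card_pos_iff.mpr ⟨v⟩
  set S := univ.filter (fun p : V × V => A p.1 p.2) with hS
  have hsplit : arcCount A
      = (S.filter (fun p => p.1 ∈ V1)).card + (S.filter (fun p => ¬ p.1 ∈ V1)).card := by
    rw [arcCount, ← hS, card_filter_add_card_filter_not]
  -- bound on arcs from V2
  have h2 : (S.filter (fun p => ¬ p.1 ∈ V1)).card ≤ (n - d) * d := by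
    have heq : (S.filter (fun p => ¬ p.1 ∈ V1)).card
        = ∑ u ∈ univ \ V1, ((S.filter (fun p => ¬ p.1 ∈ V1)).filter (fun p => p.1 = u)).card := by
      apply card_eq_sum_card_fiberwise
      intro p hp
      simp only [hS, Finset.mem_coe, mem_filter, mem_sdiff, mem_univ, true_and] at hp ⊢
      exact hp.2
    rw [heq]
    have hb : ∀ u ∈ univ \ V1,
        ((S.filter (fun p => ¬ p.1 ∈ V1)).filter (fun p => p.1 = u)).card ≤ d := by
      intro u _
      refine le_trans (Finset.card_le_card_of_injOn (fun p => p.2) ?_ ?_) (hmax u)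
      · intro p hp
        simp only [hS, Finset.mem_coe, mem_filter, mem_univ, true_and] at hp
        simp only [outN, Finset.mem_coe, mem_filter, mem_univ, true_and]
        rw [← hp.2]; exact hp.1.1
      · intro p hp q hq hpq
        simp only [hS, Finset.mem_coe, mem_filter] at hp hq
        exact Prod.ext (hp.2.trans hq.2.symm) hpq
    calc ∑ u ∈ univ \ V1, ((S.filter (fun p => ¬ p.1 ∈ V1)).filter (fun p => p.1 = u)).card
        ≤ ∑ _u ∈ univ \ V1, d := Finset.sum_le_sum hb
      _ = (n - d) * d := by rw [Finset.sum_const, smul_eq_mul, card_sdiff_of_subset (subset_univ _),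
            card_univ, ← hn, hcard1]
  -- bound on arcs from V1
  have h1 : (S.filter (fun p => p.1 ∈ V1)).card ≤ t * n + 1 := by
    have heq : (S.filter (fun p => p.1 ∈ V1)).card
        = ∑ z ∈ univ, ((S.filter (fun p => p.1 ∈ V1)).filter (fun p => p.2 = z)).card := by
      apply card_eq_sum_card_fiberwise
      intro p _; exact mem_univ _
    rw [heq]
    have hb : ∀ z ∈ univ,
        ((S.filter (fun p => p.1 ∈ V1)).filter (fun p => p.2 = z)).card
        ≤ if z = v then t + 1 else t := by
      intro z _
      by_cases hz : z = v
      · subst hz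
        simp only [if_pos rfl]
        refine le_trans (Finset.card_le_card_of_injOn (fun p => p.1) ?_ ?_) hτ
        · intro p hp
          simp only [hS, Finset.mem_coe, mem_filter, mem_univ, true_and] at hp
          simp only [Finset.mem_coe, mem_inter, hV1, outN, inN, mem_filter, mem_univ, true_and]
          refine ⟨?_, ?_⟩
          · have := hp.1.2; simpa [hV1, outN] using this
          · rw [← hp.2]; exact hp.1.1
        · intro p hp q hq hpq
          simp only [hS, Finset.mem_coe, mem_filter] at hp hq
          exact Prod.ext hpq (hp.2.trans hq.2.symm)
      · simp only [if_neg hz]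
        refine le_trans (Finset.card_le_card_of_injOn (fun p => p.1) ?_ ?_)
          (hfree v z (fun h => hz h.symm))
        · intro p hp
          simp only [hS, Finset.mem_coe, mem_filter, mem_univ, true_and] at hp
          simp only [Finset.mem_coe, mem_filter, mem_univ, true_and]
          have h1 : A v p.1 := by have := hp.1.2; simpa [hV1, outN] using this
          exact ⟨h1, by rw [← hp.2]; exact hp.1.1⟩
        · intro p hp q hq hpq
          simp only [hS, Finset.mem_coe, mem_filter] at hp hq
          exact Prod.ext hpq (hp.2.trans hq.2.symm)
    calc ∑ z ∈ univ, ((S.filter (fun p => p.1 ∈ V1)).filter (fun p => p.2 = z)).card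
        ≤ ∑ z ∈ univ, (if z = v then t + 1 else t) := Finset.sum_le_sum hb
      _ = t * n + 1 := by
          have : ∑ z ∈ univ, (if z = v then t + 1 else t)
              = ∑ z ∈ univ, ((if z = v then 1 else 0) + t) := by
            apply Finset.sum_congr rfl; intro z _; split <;> omega
          rw [this, Finset.sum_add_distrib, Finset.sum_ite_eq' univ v (fun _ => 1),
            if_pos (mem_univ v), Finset.sum_const, smul_eq_mul, card_univ, ← hn]
          ring
  have hnd : n - d = (n - t) / 2 := by omega
  calc arcCount A ≤ (t * n + 1) + (n - d) * d := by rw [hsplit]; omega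
    _ ≤ d * ((n - t) / 2) + t * n + 1 := by
        rw [hnd, Nat.mul_comm ((n - t) / 2) d]; omega
end
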